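/- For any five matrices M, P₀, P₁, P₂, P₃ in SL(2,ℂ), define s₃(C₁,C₂,C₃) = tr(C₁)·tr(C₃C₂) + tr(C₂)·tr(C₃C₁) + tr(C₃)·tr(C₂C₁) − tr(C₃)·tr(C₂)·tr(C₁) − 2·tr(C₃C₂C₁) and z(C,D) = tr(C·D) − (1/2)·tr(C)·tr(D). Then Σ_{k=0}^{3} (−1)^k · z(M, P_k) · s₃(P_{k₁}, P_{k₂}, P_{k₃}) = 0, where for each k the indices k₁ < k₂ < k₃ list {0,1,2,3} \ {k} in increasing order. -/

import Mathlib

/-!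
Both `zf` and `s3` only see the traceless parts of their arguments. In coordinates on the
three-dimensional space `sl₂(ℂ)` of traceless matrices, `zf M ·` is a linear functional `w` and
`s3` is twice the determinant. The relation is then the Laplace expansion, along the first row,
of the `4 × 4` determinant with columns `(w ⬝ᵥ v k, v k)`, which vanishes because its first row
is a linear combination of the other three.
-/

open Matrix

/-- `s₃(C₁,C₂,C₃) = tr(C₁)tr(C₃C₂) + tr(C₂)tr(C₃C₁) + tr(C₃)tr(C₂C₁)
   − tr(C₃)tr(C₂)tr(C₁) − 2 tr(C₃C₂C₁)`. -/
noncomputable def s3 (C1 C2 C3 : Matrix (Fin 2) (Fin 2) ℂ) : ℂ :=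
  C1.trace * (C3 * C2).trace + C2.trace * (C3 * C1).trace + C3.trace * (C2 * C1).trace
    - C3.trace * C2.trace * C1.trace - 2 * (C3 * C2 * C1).trace

/-- `z(C,D) = tr(CD) − (1/2) tr(C) tr(D)`. -/
noncomputable def zf (C D : Matrix (Fin 2) (Fin 2) ℂ) : ℂ :=
  (C * D).trace - (1 / 2) * C.trace * D.trace

theorem sum_neg_one_pow_mul_dotProduct_mul_det_succAbove_eq_zero {R : Type*} [CommRing R] {n : ℕ}
    (w : Fin n → R) (v : Fin (n + 1) → Fin n → R) :
    ∑ k : Fin (n + 1), (-1) ^ (k : ℕ) * (w ⬝ᵥ v k) * det (of fun i => v (k.succAbove i)) = 0 := by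
  set N : Matrix (Fin (n + 1)) (Fin (n + 1)) R :=
    of (Fin.cons (fun k => w ⬝ᵥ v k) fun j k => v k j)
  have row_zero : N = N.updateRow 0 (∑ i, (Fin.cons 0 w : Fin (n + 1) → R) i • N i) := by
    ext i k
    refine Fin.cases ?_ (fun j => ?_) i
    · simp [N, Fin.sum_univ_succ, dotProduct]
    · simp [N]
  have det_N : N.det = 0 := by
    rw [row_zero, det_updateRow_sum]
    simp
  rw [det_succ_row_zero] at det_N
  rw [← det_N]
  refine Finset.sum_congr rfl fun k _ => ?_
  rw [← det_transpose]
  rfl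

/-- Coordinates of the traceless part `C - (tr C / 2) • 1` in the basis `H, E, F` of `sl₂(ℂ)`. -/
noncomputable def tracelessCoords (C : Matrix (Fin 2) (Fin 2) ℂ) : Fin 3 → ℂ :=
  ![(C 0 0 - C 1 1) / 2, C 0 1, C 1 0]

theorem zf_eq_dotProduct_tracelessCoords (C D : Matrix (Fin 2) (Fin 2) ℂ) :
    zf C D = ![2 * tracelessCoords C 0, tracelessCoords C 2, tracelessCoords C 1] ⬝ᵥ
      tracelessCoords D := by
  simp only [zf, tracelessCoords, trace_fin_two, mul_apply, Fin.sum_univ_two, dotProduct,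
    Fin.sum_univ_three, cons_val_zero, cons_val_one, cons_val]
  ring

theorem s3_eq_two_mul_det_tracelessCoords (C1 C2 C3 : Matrix (Fin 2) (Fin 2) ℂ) :
    s3 C1 C2 C3 = 2 * det (of ![tracelessCoords C1, tracelessCoords C2, tracelessCoords C3]) := by
  simp only [s3, tracelessCoords, trace_fin_two, mul_apply, Fin.sum_univ_two, det_fin_three,
    of_apply, cons_val', cons_val_zero, cons_val_fin_one, cons_val_one, cons_val]
  ring

theorem type2_relation_general (M : Matrix (Fin 2) (Fin 2) ℂ)
    (P : Fin 4 → Matrix (Fin 2) (Fin 2) ℂ) :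
    zf M (P 0) * s3 (P 1) (P 2) (P 3) - zf M (P 1) * s3 (P 0) (P 2) (P 3)
      + zf M (P 2) * s3 (P 0) (P 1) (P 3) - zf M (P 3) * s3 (P 0) (P 1) (P 2) = 0 := by
  set v := fun k => tracelessCoords (P k)
  have minor (k a b c : Fin 4) (h : k.succAbove = ![a, b, c]) :
      det (of fun i => v (k.succAbove i)) = det (of ![v a, v b, v c]) := by
    rw [h]; congr; ext i; fin_cases i <;> rfl
  have expansion := sum_neg_one_pow_mul_dotProduct_mul_det_succAbove_eq_zero
    ![2 * tracelessCoords M 0, tracelessCoords M 2, tracelessCoords M 1] v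
  rw [Fin.sum_univ_four, minor 0 1 2 3 (by decide), minor 1 0 2 3 (by decide),
    minor 2 0 1 3 (by decide), minor 3 0 1 2 (by decide)] at expansion
  simp only [Fin.coe_ofNat_eq_mod] at expansion
  simp only [zf_eq_dotProduct_tracelessCoords, s3_eq_two_mul_det_tracelessCoords]
  linear_combination 2 * expansion

/-- Type 2 relation:
`Σ_{k=0}^{3} (−1)^k z(M, P_k) s₃(P_{k₁}, P_{k₂}, P_{k₃}) = 0`, where for each `k`
the indices `k₁ < k₂ < k₃` list `{0,1,2,3} \ {k}` in increasing order. -/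
theorem type2_relation (M : Matrix (Fin 2) (Fin 2) ℂ)
    (P : Fin 4 → Matrix (Fin 2) (Fin 2) ℂ)
    (hM : M.det = 1) (hP : ∀ k, (P k).det = 1) :
    zf M (P 0) * s3 (P 1) (P 2) (P 3) - zf M (P 1) * s3 (P 0) (P 2) (P 3)
      + zf M (P 2) * s3 (P 0) (P 1) (P 3) - zf M (P 3) * s3 (P 0) (P 1) (P 2) = 0 :=
  type2_relation_general M P
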